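/- arXiv:1307.4803 — 4 statements merged into one kernel-verified Lean document; each statement's English description precedes it below -/
import Mathlib

section
/- For all integers s ≥ 2 and k ≥ 1, set n = sk and let G be the digraph on n vertices obtained from the complete digraph on n vertices (both directed edges present between every pair of distinct vertices) by deleting, for every pair of distinct vertices inside a fixed set S of k + 1 vertices, both directed edges between them. Then the minimum total degree of G equals 2(1 − 1/s)n − 2, yet the vertex set of G admits no partition into k sets of size s each of which induces a subdigraph containing a tournament on s vertices (i.e., a subdigraph in which between every pair of vertices of the part at least one directed edge is present). -/
/-!
Every vertex of `S` is adjacent exactly to the `n - (k + 1)` vertices outside `S`, in both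
directions, and every other vertex to all `n - 1` others; since `n = sk`, the smaller value
`2(n - k - 1)` is `2(1 - 1/s)n - 2`. A part spanning a tournament contains at most one vertex
of the independent set `S`, so `k` parts cover at most `k < |S|` of its vertices.
-/

/-- The total degree `d(v) = d⁺(v) + d⁻(v)` of `v` in the digraph `G`. -/
noncomputable def totDeg {V : Type*} (G : V → V → Prop) (v : V) : ℕ :=
  Nat.card {w | G v w} + Nat.card {w | G w v}

lemma totDeg_eq_two_mul_of_symm {V : Type*} {G : V → V → Prop} (hG : ∀ x y, G x y → G y x)
    (v : V) : totDeg G v = 2 * Nat.card {w | G v w} := by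
  have hin : {w | G w v} = {w | G v w} := Set.ext fun w => ⟨hG w v, hG v w⟩
  rw [totDeg, hin, two_mul]

lemma card_le_card_of_independent_of_cover {V ι : Type*} [Fintype ι] {G : V → V → Prop}
    {S : Finset V} (hS : ∀ x ∈ S, ∀ y ∈ S, ¬ G x y) (parts : ι → Finset V)
    (hcover : ∀ v, ∃ i, v ∈ parts i)
    (htour : ∀ i, ∀ x ∈ parts i, ∀ y ∈ parts i, x ≠ y → G x y ∨ G y x) :
    S.card ≤ Fintype.card ι := by
  choose part hpart using hcover
  refine Finset.card_le_card_of_injOn part (fun _ _ => Finset.mem_coe.2 (Finset.mem_univ _)) ?_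
  intro x hx y hy hxy
  by_contra hne
  have hy' : y ∈ parts (part x) := hxy ▸ hpart y
  rcases htour _ x (hpart x) y hy' hne with h | h
  · exact hS x hx y hy h
  · exact hS y hy x hx h

section CompleteMinusClique

variable {V : Type*}

def completeMinusClique (S : Finset V) (x y : V) : Prop :=
  x ≠ y ∧ ¬(x ∈ S ∧ y ∈ S)

variable {S : Finset V}

lemma completeMinusClique_symm {x y : V} (h : completeMinusClique S x y) :
    completeMinusClique S y x :=
  ⟨h.1.symm, fun hyx => h.2 hyx.symm⟩

lemma setOf_completeMinusClique_of_mem {v : V} (hv : v ∈ S) :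
    {w | completeMinusClique S v w} = (↑S)ᶜ := by
  ext w
  simp only [completeMinusClique, Set.mem_ofPred_eq, Set.mem_compl_iff, Finset.mem_coe, hv,
    true_and]
  exact ⟨And.right, fun hw => ⟨fun h => hw (h ▸ hv), hw⟩⟩

lemma setOf_completeMinusClique_of_notMem {v : V} (hv : v ∉ S) :
    {w | completeMinusClique S v w} = {v}ᶜ := by
  ext w
  simp only [completeMinusClique, Set.mem_ofPred_eq, Set.mem_compl_iff, Set.mem_singleton_iff,
    hv, false_and, not_false_eq_true, and_true]
  exact ne_comm

variable [Finite V]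

lemma totDeg_completeMinusClique_of_mem {v : V} (hv : v ∈ S) :
    totDeg (completeMinusClique S) v = 2 * (Nat.card V - S.card) := by
  rw [totDeg_eq_two_mul_of_symm (fun _ _ => completeMinusClique_symm),
    setOf_completeMinusClique_of_mem hv, Nat.card_coe_set_eq, Set.ncard_compl,
    Set.ncard_coe_finset]

lemma totDeg_completeMinusClique_of_notMem {v : V} (hv : v ∉ S) :
    totDeg (completeMinusClique S) v = 2 * (Nat.card V - 1) := by
  rw [totDeg_eq_two_mul_of_symm (fun _ _ => completeMinusClique_symm),
    setOf_completeMinusClique_of_notMem hv, Nat.card_coe_set_eq, Set.ncard_compl,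
    Set.ncard_singleton]

lemma two_mul_card_sub_card_le_totDeg_completeMinusClique (hS : S.Nonempty) (v : V) :
    2 * (Nat.card V - S.card) ≤ totDeg (completeMinusClique S) v := by
  by_cases hv : v ∈ S
  · rw [totDeg_completeMinusClique_of_mem hv]
  · rw [totDeg_completeMinusClique_of_notMem hv]
    have := hS.card_pos
    omega

end CompleteMinusClique

theorem extremal_example_no_tournament_factor_general
    (s k : ℕ)
    {V : Type*} [Fintype V]
    (hn : Fintype.card V = s * k)
    (S : Finset V) (hS : S.card = k + 1)
    (G : V → V → Prop)
    (hG : ∀ x y, G x y ↔ (x ≠ y ∧ ¬(x ∈ S ∧ y ∈ S))) :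
    (∀ v : V, 2 * (1 - 1 / (s : ℝ)) * (Fintype.card V : ℝ) - 2 ≤ (totDeg G v : ℝ)) ∧
    (∃ v : V, (totDeg G v : ℝ) = 2 * (1 - 1 / (s : ℝ)) * (Fintype.card V : ℝ) - 2) ∧
    ¬ ∃ parts : Fin k → Finset V,
        (∀ i, (parts i).card = s) ∧ (∀ v : V, ∃! i, v ∈ parts i) ∧
        ∀ i, ∀ x ∈ parts i, ∀ y ∈ parts i, x ≠ y → G x y ∨ G y x := by
  obtain rfl : G = completeMinusClique S := funext₂ fun x y => propext (hG x y)
  have hSV : k + 1 ≤ s * k := hS ▸ hn ▸ S.card_le_univ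
  rw [← Nat.card_eq_fintype_card] at hn ⊢
  have hs : (s : ℝ) ≠ 0 := Nat.cast_ne_zero.2 (by rintro rfl; omega)
  have hmin : 2 * (1 - 1 / (s : ℝ)) * (Nat.card V : ℝ) - 2 =
      ((2 * (Nat.card V - S.card) : ℕ) : ℝ) := by
    rw [Nat.cast_mul, Nat.cast_sub (hn ▸ hS ▸ hSV), hn, hS]
    push_cast
    field_simp
    ring
  have hSne : S.Nonempty := Finset.card_pos.1 (by omega)
  rw [hmin]
  refine ⟨fun v => by exact_mod_cast two_mul_card_sub_card_le_totDeg_completeMinusClique hSne v,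
    ?_, ?_⟩
  · obtain ⟨v, hv⟩ := hSne
    exact ⟨v, by rw [totDeg_completeMinusClique_of_mem hv]⟩
  · rintro ⟨parts, -, hcover, htour⟩
    have hle := card_le_card_of_independent_of_cover (fun x hx y hy h => h.2 ⟨hx, hy⟩) parts
      (fun v => (hcover v).exists) htour
    rw [hS, Fintype.card_fin] at hle
    omega

/-- **Extremal example.** For `s ≥ 2`, `k ≥ 1` and `n = sk`, the digraph obtained from the
complete digraph on `n` vertices by deleting all edges (in both directions) inside a fixed
set `S` of `k + 1` vertices has minimum total degree exactly `2(1 − 1/s)n − 2`, yet its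
vertex set has no partition into `k` sets of size `s` each of which induces a subdigraph
containing a tournament on `s` vertices. -/
theorem extremal_example_no_tournament_factor
    (s k : ℕ) (hs : 2 ≤ s) (hk : 1 ≤ k)
    {V : Type*} [Fintype V] [DecidableEq V]
    (hn : Fintype.card V = s * k)
    (S : Finset V) (hS : S.card = k + 1)
    (G : V → V → Prop)
    (hG : ∀ x y, G x y ↔ (x ≠ y ∧ ¬(x ∈ S ∧ y ∈ S))) :
    (∀ v : V, 2 * (1 - 1 / (s : ℝ)) * (Fintype.card V : ℝ) - 2 ≤ (totDeg G v : ℝ)) ∧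
    (∃ v : V, (totDeg G v : ℝ) = 2 * (1 - 1 / (s : ℝ)) * (Fintype.card V : ℝ) - 2) ∧
    ¬ ∃ parts : Fin k → Finset V,
        (∀ i, (parts i).card = s) ∧ (∀ v : V, ∃! i, v ∈ parts i) ∧
        ∀ i, ∀ x ∈ parts i, ∀ y ∈ parts i, x ≠ y → G x y ∨ G y x :=
  extremal_example_no_tournament_factor_general s k hn S hS G hG
end

section
/- Let s, k ≥ 1 and let G be a simple digraph on sk vertices with a nearly equitable acyclic k-coloring f. If in the auxiliary digraph H(f) there is a directed path from the large class V^+ to the small class V^-, then G has an equitable acyclic k-coloring. -/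
/-- The set `S` induces an acyclic subdigraph of the digraph `G`
(no directed cycles, including 2-cycles). -/
def DigraphAcyclicOn {V : Type*} (G : V → V → Prop) (S : Set V) : Prop :=
  ∀ x : V, ¬ Relation.TransGen (fun a b => a ∈ S ∧ b ∈ S ∧ G a b) x x

/-- An equitable acyclic `k`-coloring of a digraph: a partition of the vertex set into
`k` acyclic classes any two of which differ in size by at most one. -/
def HasEquitableAcyclicColoring {V : Type*} (G : V → V → Prop) (k : ℕ) : Prop :=
  ∃ c : V → Fin k,
    (∀ i, DigraphAcyclicOn G {v | c v = i}) ∧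
    ∀ i j, Nat.card {v | c v = i} ≤ Nat.card {v | c v = j} + 1

/-- The edge relation of the auxiliary digraph `H(f)` on the color classes of `f`:
there is an edge from class `i` to class `j` iff `i ≠ j` and there is a witness
`y` in class `i` such that adding `y` to class `j` leaves it acyclic. -/
def AuxAdj {V : Type*} {k : ℕ} (G : V → V → Prop) (f : V → Fin k) (i j : Fin k) : Prop :=
  i ≠ j ∧ ∃ y : V, f y = i ∧ DigraphAcyclicOn G (insert y {v | f v = j})

/-!
Follow a path `V⁺ = W₀ → W₁ → ⋯ → Wₘ = V⁻` in `H(f)` without repeated classes and move the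
witness of the first edge from `W₀` into `W₁`. All classes stay acyclic and `W₁` becomes the
large class of a new nearly equitable coloring. The move only touches `W₀` and `W₁`, which the
rest of the path never enters again, so that path survives in the new auxiliary digraph, and by
induction on its length we end by moving a vertex into `V⁻`, when every class has size `s`.
-/

theorem List.exists_nodup_isChain_cons_of_relationReflTransGen {α : Type*} {r : α → α → Prop}
    {a b : α} (h : Relation.ReflTransGen r a b) :
    ∃ l, (a :: l).IsChain r ∧ (a :: l).getLast (cons_ne_nil _ _) = b ∧ (a :: l).Nodup := by
  induction h using Relation.ReflTransGen.head_induction_on with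
  | refl => exact ⟨[], .singleton _, rfl, nodup_singleton _⟩
  | @head a c hac _ ih =>
    obtain ⟨l, hchain, hlast, hnodup⟩ := ih
    by_cases ha : a ∈ c :: l
    · -- a cycle back to `a` is cut off
      obtain ⟨pre, tl, hsplit⟩ := append_of_mem ha
      have hsuffix : a :: tl <:+ c :: l := ⟨pre, hsplit.symm⟩
      refine ⟨tl, hchain.suffix hsuffix, ?_, hsuffix.sublist.nodup hnodup⟩
      simp_all [getLast_append_of_ne_nil]
    · exact ⟨c :: l, .cons_cons hac hchain, by rwa [getLast_cons_cons],
        nodup_cons.mpr ⟨ha, hnodup⟩⟩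

section

variable {V : Type*} {k : ℕ} {G : V → V → Prop} {g : V → Fin k} {s : ℕ} {small large : Fin k}

theorem DigraphAcyclicOn.mono {S T : Set V} (hT : DigraphAcyclicOn G T) (h : S ⊆ T) :
    DigraphAcyclicOn G S := fun x hx =>
  hT x (Relation.TransGen.mono (fun _ _ ⟨ha, hb, hab⟩ => ⟨h ha, h hb, hab⟩) _ _ hx)

structure IsNearlyEquitableAcyclicColoring (G : V → V → Prop) (s : ℕ) (g : V → Fin k)
    (small large : Fin k) : Prop where
  acyclic : ∀ i, DigraphAcyclicOn G {v | g v = i}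
  card_small : Nat.card {v | g v = small} = s - 1
  card_large : Nat.card {v | g v = large} = s + 1
  card_other : ∀ i, i ≠ small → i ≠ large → Nat.card {v | g v = i} = s

namespace IsNearlyEquitableAcyclicColoring

theorem small_ne_large (hg : IsNearlyEquitableAcyclicColoring G s g small large) :
    small ≠ large := by
  rintro rfl
  have := hg.card_small.symm.trans hg.card_large
  omega

end IsNearlyEquitableAcyclicColoring

variable [DecidableEq V] {y : V} {c i : Fin k}

theorem setOf_update_eq_of_ne (hi : i ≠ g y) (hc : i ≠ c) :
    {v | Function.update g y c v = i} = {v | g v = i} := by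
  ext v
  rcases eq_or_ne v y with rfl | hv
  · simp [hi.symm, hc.symm]
  · simp [hv]

theorem setOf_update_eq_self : {v | Function.update g y c v = c} = insert y {v | g v = c} := by
  ext v
  rcases eq_or_ne v y with rfl | hv <;> simp_all

theorem setOf_update_eq_old (hc : g y ≠ c) :
    {v | Function.update g y c v = g y} = {v | g v = g y} \ {y} := by
  ext v
  rcases eq_or_ne v y with rfl | hv
  · simp [hc.symm]
  · simp [hv]

theorem acyclicOn_update (hacy : ∀ i, DigraphAcyclicOn G {v | g v = i})
    (hy : DigraphAcyclicOn G (insert y {v | g v = c})) (i : Fin k) :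
    DigraphAcyclicOn G {v | Function.update g y c v = i} := by
  rcases eq_or_ne i c with rfl | hic
  · rwa [setOf_update_eq_self]
  rcases eq_or_ne i (g y) with rfl | hiy
  · rw [setOf_update_eq_old (Ne.symm hic).symm]
    exact (hacy _).mono Set.sdiff_subset
  · rw [setOf_update_eq_of_ne hiy hic]
    exact hacy i

theorem AuxAdj.update {a b : Fin k} (h : AuxAdj G g a b) (ha : a ≠ g y) (hb : b ≠ g y)
    (hbc : b ≠ c) : AuxAdj G (Function.update g y c) a b := by
  obtain ⟨hab, z, hz, hzacy⟩ := h
  have hzy : z ≠ y := by rintro rfl; exact ha hz.symm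
  exact ⟨hab, z, by rwa [Function.update_of_ne hzy], by rwa [setOf_update_eq_of_ne hb hbc]⟩

theorem card_setOf_update_eq_self [Fintype V] (hc : g y ≠ c) :
    Nat.card {v | Function.update g y c v = c} = Nat.card {v | g v = c} + 1 := by
  have hy : y ∉ {v | g v = c} := hc
  simp only [setOf_update_eq_self, Nat.card_coe_set_eq, Set.ncard_insert_of_notMem hy]

theorem card_setOf_update_eq_old [Fintype V] (hc : g y ≠ c) :
    Nat.card {v | Function.update g y c v = g y} + 1 = Nat.card {v | g v = g y} := by
  have hy : y ∈ {v | g v = g y} := rfl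
  simp only [setOf_update_eq_old hc, Nat.card_coe_set_eq]
  exact Set.ncard_sdiff_singleton_add_one hy

namespace IsNearlyEquitableAcyclicColoring

theorem update [Fintype V] (hg : IsNearlyEquitableAcyclicColoring G s g small large)
    (hy : g y = large) (hyc : DigraphAcyclicOn G (insert y {v | g v = c})) (hc : c ≠ large)
    (hcs : c ≠ small) :
    IsNearlyEquitableAcyclicColoring G s (Function.update g y c) small c := by
  subst hy
  refine ⟨acyclicOn_update hg.acyclic hyc, ?_, ?_, fun i his hic => ?_⟩
  · rw [setOf_update_eq_of_ne hg.small_ne_large hcs.symm, hg.card_small]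
  · rw [card_setOf_update_eq_self hc.symm, hg.card_other c hcs hc]
  · rcases eq_or_ne i (g y) with rfl | hil
    · have := card_setOf_update_eq_old hc.symm
      rw [hg.card_large] at this
      omega
    · rw [setOf_update_eq_of_ne hil hic, hg.card_other i his hil]

theorem hasEquitableAcyclicColoring_update [Fintype V] (hs : 1 ≤ s)
    (hg : IsNearlyEquitableAcyclicColoring G s g small large) (hy : g y = large)
    (hys : DigraphAcyclicOn G (insert y {v | g v = small})) :
    HasEquitableAcyclicColoring G k := by
  subst hy
  have hcard : ∀ i, Nat.card {v | Function.update g y small v = i} = s := by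
    intro i
    rcases eq_or_ne i small with rfl | his
    · rw [card_setOf_update_eq_self hg.small_ne_large.symm, hg.card_small]
      omega
    rcases eq_or_ne i (g y) with rfl | hil
    · have := card_setOf_update_eq_old hg.small_ne_large.symm
      rw [hg.card_large] at this
      omega
    · rw [setOf_update_eq_of_ne hil his, hg.card_other i his hil]
  exact ⟨_, acyclicOn_update hg.acyclic hys, fun i j => by rw [hcard i, hcard j]; omega⟩

theorem hasEquitableAcyclicColoring_of_isChain [Fintype V] (hs : 1 ≤ s) (l : List (Fin k))
    (hg : IsNearlyEquitableAcyclicColoring G s g small large)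
    (hchain : (large :: l).IsChain (AuxAdj G g))
    (hlast : (large :: l).getLast (List.cons_ne_nil _ _) = small) (hnodup : (large :: l).Nodup) :
    HasEquitableAcyclicColoring G k := by
  induction l generalizing g large with
  | nil => exact absurd hlast hg.small_ne_large.symm
  | cons c l ih =>
    obtain ⟨⟨hne, y, hy, hyc⟩, htail⟩ := List.isChain_cons_cons.mp hchain
    rcases eq_or_ne c small with rfl | hcs
    · exact hg.hasEquitableAcyclicColoring_update hs hy hyc
    obtain ⟨hlarge, hnodup'⟩ := List.nodup_cons.mp hnodup
    refine ih (hg.update hy hyc hne.symm hcs) ?_ (by rwa [List.getLast_cons_cons] at hlast) hnodup'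
    refine htail.imp_of_mem_tail_imp fun a b ha hb hab => hab.update ?_ ?_ ?_
    · rintro rfl; exact hlarge (hy ▸ ha)
    · rintro rfl; exact hlarge (hy ▸ List.mem_of_mem_tail hb)
    · rintro rfl; exact (List.nodup_cons.mp hnodup').1 hb

end IsNearlyEquitableAcyclicColoring

end

theorem equitable_of_path_from_large_to_small_general
    (s k : ℕ) (hs : 1 ≤ s)
    {V : Type*} [Fintype V]
    (G : V → V → Prop)
    (f : V → Fin k)
    (iminus iplus : Fin k)
    (hacy : ∀ i, DigraphAcyclicOn G {v | f v = i})
    (hsmall : Nat.card {v | f v = iminus} = s - 1)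
    (hlarge : Nat.card {v | f v = iplus} = s + 1)
    (hother : ∀ i, i ≠ iminus → i ≠ iplus → Nat.card {v | f v = i} = s)
    (hpath : Relation.ReflTransGen (AuxAdj G f) iplus iminus) :
    HasEquitableAcyclicColoring G k := by
  classical
  obtain ⟨l, hchain, hlast, hnodup⟩ :=
    List.exists_nodup_isChain_cons_of_relationReflTransGen hpath
  exact IsNearlyEquitableAcyclicColoring.hasEquitableAcyclicColoring_of_isChain hs l
    ⟨hacy, hsmall, hlarge, hother⟩ hchain hlast hnodup

/-- **Claim.** If `f` is a nearly equitable acyclic `k`-coloring of a simple digraph `G` on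
`sk` vertices (small class of size `s − 1`, large class of size `s + 1`, all other classes of
size `s`) and the large class can reach the small class by a directed path in the auxiliary
digraph `H(f)`, then `G` has an equitable acyclic `k`-coloring. -/
theorem equitable_of_path_from_large_to_small
    (s k : ℕ) (hs : 1 ≤ s) (hk : 1 ≤ k)
    {V : Type*} [Fintype V]
    (hn : Fintype.card V = s * k)
    (G : V → V → Prop) (hirr : Irreflexive G)
    (f : V → Fin k)
    (iminus iplus : Fin k) (hne : iminus ≠ iplus)
    (hacy : ∀ i, DigraphAcyclicOn G {v | f v = i})
    (hsmall : Nat.card {v | f v = iminus} = s - 1)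
    (hlarge : Nat.card {v | f v = iplus} = s + 1)
    (hother : ∀ i, i ≠ iminus → i ≠ iplus → Nat.card {v | f v = i} = s)
    (hpath : Relation.ReflTransGen (AuxAdj G f) iplus iminus) :
    HasEquitableAcyclicColoring G k :=
  equitable_of_path_from_large_to_small_general s k hs G f iminus iplus hacy hsmall hlarge hother
    hpath
end

section
/- For every integer p ≥ 1 set k = 2p + 1 and let D be the digraph on 3k vertices constructed as follows: partition the vertices into sets X and Y with |X| = 3p + 2 and |Y| = 3p + 1; start from the complete digraph (both directed edges between every pair of distinct vertices); delete all edges directed from a vertex of X to a vertex of Y; and finally reverse the orientation of every edge incident to one fixed vertex v ∈ Y. Then D is strongly connected, its minimum total degree is δ(D) = 9p + 2 = (3·|D| − 3)/2 − 1, and D has no cyclic triangle factor, i.e., the vertex set of D cannot be partitioned into vertex-disjoint directed cycles of length 3. -/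
open Finset

section

variable {V : Type*}

theorem totDeg_eq_card_add_card {G : V → V → Prop} {u : V} {s t : Finset V}
    (hs : ∀ w, G u w ↔ w ∈ s) (ht : ∀ w, G w u ↔ w ∈ t) : totDeg G u = #s + #t := by
  have hs' : {w | G u w} = ↑s := Set.ext hs
  have ht' : {w | G w u} = ↑t := Set.ext ht
  rw [totDeg, hs', ht', Nat.card_coe_set_eq, Nat.card_coe_set_eq, Set.ncard_coe_finset,
    Set.ncard_coe_finset]

variable [DecidableEq V]

def IsCyclicTriangleFactor {ι : Type*} (G : V → V → Prop) (parts : ι → Finset V) : Prop :=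
  (∀ u : V, ∃! i, u ∈ parts i) ∧
    ∀ i, ∃ a b c : V, parts i = {a, b, c} ∧ #(parts i) = 3 ∧ G a b ∧ G b c ∧ G c a

theorem sum_card_inter_eq_card {ι : Type*} [Fintype ι] {parts : ι → Finset V}
    (hparts : ∀ u : V, ∃! i, u ∈ parts i) (X : Finset V) : ∑ i, #(parts i ∩ X) = #X := by
  classical
  choose idx hidx hidx_unique using hparts
  rw [card_eq_sum_card_fiberwise (f := idx) (t := univ) fun _ _ => mem_univ _]
  refine sum_congr rfl fun i _ => congrArg card ?_
  ext u
  simp only [mem_inter, mem_filter]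
  exact ⟨fun ⟨hu, hX⟩ => ⟨hX, (hidx_unique u i hu).symm⟩,
    fun ⟨hX, hi⟩ => ⟨hi ▸ hidx u, hX⟩⟩

def reverseAt (G : V → V → Prop) (v x y : V) : Prop :=
  if x = v ∨ y = v then G y x else G x y

def completeMinusOutCut (X : Finset V) (x y : V) : Prop :=
  x ≠ y ∧ ¬(x ∈ X ∧ y ∉ X)

abbrev extremalDigraph (X : Finset V) (v : V) : V → V → Prop :=
  reverseAt (completeMinusOutCut X) v

namespace extremalDigraph

variable {X : Finset V} {u v : V}

theorem adj_self_right (hv : v ∉ X) {x : V} (hx : x ≠ v) : extremalDigraph X v x v := by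
  simp [reverseAt, completeMinusOutCut, hv, Ne.symm hx]

theorem adj_self_left_iff (hv : v ∉ X) {y : V} :
    extremalDigraph X v v y ↔ y ≠ v ∧ y ∉ X := by
  simp [reverseAt, completeMinusOutCut, hv, eq_comm]

theorem adj_iff_of_ne {x y : V} (hx : x ≠ v) (hy : y ≠ v) :
    extremalDigraph X v x y ↔ x ≠ y ∧ ¬(x ∈ X ∧ y ∉ X) := by
  simp [reverseAt, completeMinusOutCut, hx, hy]

theorem mem_of_adj_of_mem {x y : V} (hx : x ≠ v) (hy : y ≠ v) (hxy : extremalDigraph X v x y)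
    (hxX : x ∈ X) : y ∈ X := by
  by_contra hyX
  exact ((adj_iff_of_ne hx hy).mp hxy).2 ⟨hxX, hyX⟩

theorem reflTransGen (hv : v ∉ X) (hY : ∃ y, y ∉ X ∧ y ≠ v) (a b : V) :
    Relation.ReflTransGen (extremalDigraph X v) a b := by
  have to_v : ∀ a, Relation.ReflTransGen (extremalDigraph X v) a v := fun a => by
    rcases eq_or_ne a v with rfl | hav
    exacts [.refl, .single (adj_self_right hv hav)]
  obtain ⟨y, hyX, hyv⟩ := hY
  rcases eq_or_ne b v with rfl | hbv
  · exact to_v a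
  refine (to_v a).trans ?_
  by_cases hbX : b ∈ X
  · refine .head ((adj_self_left_iff hv).mpr ⟨hyv, hyX⟩) (.single ?_)
    exact (adj_iff_of_ne hyv hbv).mpr ⟨fun h => hyX (h ▸ hbX), fun h => hyX h.1⟩
  · exact .single ((adj_self_left_iff hv).mpr ⟨hbv, hbX⟩)

theorem three_dvd_card_inter_of_cycle {a b c : V} (ha : a ≠ v) (hb : b ≠ v) (hc : c ≠ v)
    (hab : extremalDigraph X v a b) (hbc : extremalDigraph X v b c)
    (hca : extremalDigraph X v c a) (h3 : #({a, b, c} : Finset V) = 3) :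
    3 ∣ #({a, b, c} ∩ X) := by
  by_cases haX : a ∈ X
  · have hbX := mem_of_adj_of_mem ha hb hab haX
    have hcX := mem_of_adj_of_mem hb hc hbc hbX
    rw [inter_eq_left.mpr (by simp [insert_subset_iff, haX, hbX, hcX]), h3]
  · have hcX : c ∉ X := fun hcX => haX (mem_of_adj_of_mem hc ha hca hcX)
    have hbX : b ∉ X := fun hbX => hcX (mem_of_adj_of_mem hb hc hbc hbX)
    simp [insert_inter_of_notMem, haX, hbX, hcX]

theorem card_inter_le_one_of_adj_self (hv : v ∉ X) {y z : V}
    (hvy : extremalDigraph X v v y) : #({v, y, z} ∩ X) ≤ 1 := by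
  have hyX := ((adj_self_left_iff hv).mp hvy).2
  rw [insert_inter_of_notMem hv, insert_inter_of_notMem hyX]
  exact (card_le_card inter_subset_left).trans (card_singleton z).le

section Degrees

variable [Fintype V]

theorem totDeg_self (hv : v ∉ X) :
    totDeg (extremalDigraph X v) v + #X + 2 = 2 * Fintype.card V := by
  rw [totDeg_eq_card_add_card (s := Xᶜ.erase v) (t := univ.erase v)
    (fun w => by simp [adj_self_left_iff hv])
    (fun w => by simp [reverseAt, completeMinusOutCut, hv, eq_comm]),
    card_erase_of_mem (by simpa using hv), card_erase_of_mem (mem_univ v), card_compl, card_univ]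
  have := card_lt_univ_of_notMem hv
  omega

theorem totDeg_of_mem (hu : u ∈ X) (hv : v ∉ X) :
    totDeg (extremalDigraph X v) u + 2 = #X + Fintype.card V := by
  have huv : u ≠ v := ne_of_mem_of_not_mem hu hv
  rw [totDeg_eq_card_add_card (s := insert v (X.erase u)) (t := (univ.erase v).erase u)
    (fun w => by
      by_cases hw : w = v <;> simp [reverseAt, completeMinusOutCut, hw, huv, hu, eq_comm])
    (fun w => by
      by_cases hw : w = v <;> simp [reverseAt, completeMinusOutCut, hw, huv, hu, hv]),
    card_insert_of_notMem (fun h => hv (mem_of_mem_erase h)), card_erase_of_mem hu,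
    card_erase_of_mem (by simpa using huv), card_erase_of_mem (mem_univ v), card_univ]
  have := card_lt_univ_of_notMem hv
  have := card_pos.mpr ⟨u, hu⟩
  omega

theorem totDeg_of_notMem (hu : u ∉ X) (huv : u ≠ v) (hv : v ∉ X) :
    totDeg (extremalDigraph X v) u + #X + 2 = 2 * Fintype.card V := by
  rw [totDeg_eq_card_add_card (s := univ.erase u) (t := Xᶜ.erase u)
    (fun w => by
      by_cases hw : w = v <;> simp [reverseAt, completeMinusOutCut, hw, huv, hu, hv, eq_comm])
    (fun w => by
      by_cases hw : w = v <;> simp [reverseAt, completeMinusOutCut, hw, huv, huv.symm, hu, hv]),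
    card_erase_of_mem (mem_univ u), card_erase_of_mem (by simpa using hu), card_compl, card_univ]
  have := card_lt_univ_of_notMem hu
  omega

end Degrees

theorem card_mod_three_le_one_of_isCyclicTriangleFactor {ι : Type*} [Fintype ι] (hv : v ∉ X)
    {parts : ι → Finset V} (hF : IsCyclicTriangleFactor (extremalDigraph X v) parts) :
    #X % 3 ≤ 1 := by
  classical
  obtain ⟨hpart, htri⟩ := hF
  obtain ⟨i₀, hvi₀, hi₀⟩ := hpart v
  have hrest : 3 ∣ ∑ i ∈ univ.erase i₀, #(parts i ∩ X) := by
    refine dvd_sum fun i hi => ?_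
    obtain ⟨a, b, c, hi_eq, h3, hab, hbc, hca⟩ := htri i
    have hvi : v ∉ parts i := fun h => ne_of_mem_erase hi (hi₀ i h)
    rw [hi_eq] at hvi h3 ⊢
    simp only [mem_insert, mem_singleton, not_or] at hvi
    obtain ⟨hva, hvb, hvc⟩ := hvi
    exact three_dvd_card_inter_of_cycle (Ne.symm hva) (Ne.symm hvb) (Ne.symm hvc) hab hbc hca h3
  have hpart_v : #(parts i₀ ∩ X) ≤ 1 := by
    obtain ⟨a, b, c, hi_eq, -, hab, hbc, hca⟩ := htri i₀
    rw [hi_eq] at hvi₀ ⊢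
    simp only [mem_insert, mem_singleton] at hvi₀
    rcases hvi₀ with rfl | rfl | rfl
    · exact card_inter_le_one_of_adj_self hv hab
    · rw [insert_comm, pair_comm]
      exact card_inter_le_one_of_adj_self hv hbc
    · rw [pair_comm, insert_comm]
      exact card_inter_le_one_of_adj_self hv hca
  have hsum := sum_card_inter_eq_card hpart X
  rw [← add_sum_erase univ _ (mem_univ i₀)] at hsum
  omega

end extremalDigraph

end

open extremalDigraph in
/-- **Extremal example for cyclic triangle factors.** For `p ≥ 1` and `k = 2p + 1`,
partition `3k` vertices into `X` and `Y` with `|X| = 3p + 2` and `|Y| = 3p + 1`; take the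
complete digraph, delete all edges directed from `X` to `Y`, and reverse every edge incident
to a fixed `v ∈ Y`. The resulting digraph `D` is strongly connected, has minimum total
degree `9p + 2 = (3·|D| − 3)/2 − 1`, but has no cyclic triangle factor. -/
theorem extremal_example_no_cyclic_triangle_factor
    (p : ℕ) (hp : 1 ≤ p)
    {V : Type*} [Fintype V] [DecidableEq V]
    (hn : Fintype.card V = 3 * (2 * p + 1))
    (X Y : Finset V) (hdisj : Disjoint X Y) (hcover : X ∪ Y = Finset.univ)
    (hX : X.card = 3 * p + 2) (hY : Y.card = 3 * p + 1)
    (v : V) (hv : v ∈ Y)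
    (D : V → V → Prop)
    (hD : ∀ x y, D x y ↔
      if x = v ∨ y = v then (y ≠ x ∧ ¬(y ∈ X ∧ x ∈ Y))
      else (x ≠ y ∧ ¬(x ∈ X ∧ y ∈ Y))) :
    (∀ a b : V, Relation.ReflTransGen D a b) ∧
    (∀ u : V, 9 * p + 2 ≤ totDeg D u) ∧
    (∃ u : V, totDeg D u = 9 * p + 2) ∧
    (9 * p + 2 = (3 * Fintype.card V - 3) / 2 - 1) ∧
    ¬ ∃ parts : Fin (2 * p + 1) → Finset V,
        (∀ u : V, ∃! i, u ∈ parts i) ∧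
        ∀ i, ∃ a b c : V, parts i = {a, b, c} ∧ (parts i).card = 3 ∧
          D a b ∧ D b c ∧ D c a := by
  have hY_iff : ∀ w, w ∈ Y ↔ w ∉ X := fun w =>
    ⟨fun hwY hwX => disjoint_left.mp hdisj hwX hwY,
      fun hwX => by simpa [hwX] using hcover.ge (mem_univ w)⟩
  have hvX : v ∉ X := (hY_iff v).mp hv
  obtain rfl : D = extremalDigraph X v := by
    funext x y
    exact propext ((hD x y).trans (by simp only [reverseAt, completeMinusOutCut, hY_iff]))
  have hY_other : ∃ y, y ∉ X ∧ y ≠ v := by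
    obtain ⟨y, hy⟩ : (Y.erase v).Nonempty := by
      rw [← card_pos, card_erase_of_mem hv]
      omega
    exact ⟨y, (hY_iff y).mp (mem_of_mem_erase hy), ne_of_mem_erase hy⟩
  refine ⟨reflTransGen hvX hY_other, fun u => ?_, ⟨v, by linarith [totDeg_self hvX]⟩,
    by omega, fun ⟨_, hF⟩ => ?_⟩
  · by_cases huX : u ∈ X
    · linarith [totDeg_of_mem huX hvX]
    rcases eq_or_ne u v with rfl | huv
    · linarith [totDeg_self hvX]
    · linarith [totDeg_of_notMem huX huv hvX]
  · have := card_mod_three_le_one_of_isCyclicTriangleFactor hvX hF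
    omega
end

section
/- Let m, d be positive integers, let φ > 0, let β ∈ (0, φ/(2d)) and let γ ∈ (0, 2β(φ/(2d) − β)). There exists n0 such that for every finite set V with |V| = n ≥ n0 the following holds. Suppose that to every m-element subset S of V a set f(S) ⊆ V^d of d-tuples is assigned with |f(S)| ≥ φ·n^d for every such S. Then there exists a set F ⊆ V^d such that: every tuple of F belongs to f(S) for some m-element subset S of V; |F| ≤ βn/d; the images of distinct tuples of F are pairwise disjoint; and |f(S) ∩ F| ≥ γn for every m-element subset S of V. -/
/-!
Derandomised greedy choice by the method of conditional expectations. For `η ∈ (0, 1)` the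
potential `Φ(F) = ∑_S (1 - η) ^ |F ∩ f(S)|` starts at `(n choose m) ≤ n ^ m`. While `|F| ≤ βn/d`,
the tuples avoiding the images of `F` miss at most `dβn^d` tuples (Bernoulli), so each `f(S)` keeps
at least `δn^d` of them, `δ = φ - dβ`; by averaging, adding the best one to `F` multiplies `Φ` by
at most `1 - ηδ ≤ e^{-ηδ}`. After `⌊βn/d⌋` steps `Φ ≤ n^m e^{-ηδ(βn/d - 1)}`, whereas a set `S`
with `|F ∩ f(S)| < γn` alone contributes `(1 - η)^{γn} ≥ e^{-γnη/(1-η)}`. Since `γ < βδ/d`, a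
small `η` makes the first bound the smaller one for large `n`.
-/

open Finset Real Filter

lemma exp_neg_mul_le_one_sub_pow {η t : ℝ} (hη0 : 0 ≤ η) (hη1 : η < 1) {c : ℕ} (hc : c ≤ t) :
    exp (-(η / (1 - η) * t)) ≤ (1 - η) ^ c := by
  have h1η : 0 < 1 - η := sub_pos.2 hη1
  have hlog : -(η / (1 - η)) ≤ log (1 - η) := by
    have : 1 - (1 - η)⁻¹ = -(η / (1 - η)) := by field_simp; ring
    exact this ▸ one_sub_inv_le_log_of_pos h1η
  have hq : 0 ≤ η / (1 - η) := div_nonneg hη0 h1η.le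
  rw [← exp_log (pow_pos h1η c), log_pow]
  exact exp_le_exp.2 (by nlinarith [mul_le_mul_of_nonneg_left hlog c.cast_nonneg,
    mul_le_mul_of_nonneg_left hc hq])

section Potential

variable {ι α : Type*} [DecidableEq α] (s : Finset ι) (f : ι → Finset α)

def potential (x : ℝ) (F : Finset α) : ℝ :=
  ∑ i ∈ s, x ^ #(F ∩ f i)

lemma potential_nonneg {x : ℝ} (hx : 0 ≤ x) (F : Finset α) : 0 ≤ potential s f x F :=
  sum_nonneg fun _ _ => pow_nonneg hx _

lemma potential_insert {a : α} {F : Finset α} (ha : a ∉ F) (x : ℝ) :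
    potential s f x (insert a F) =
      potential s f x F - (1 - x) * ∑ i ∈ s with a ∈ f i, x ^ #(F ∩ f i) := by
  rw [potential, potential, sum_filter, mul_sum, ← sum_sub_distrib]
  refine sum_congr rfl fun i _ => ?_
  split_ifs with h
  · rw [insert_inter_of_mem h, card_insert_of_notMem fun h' => ha (mem_inter.1 h').1, pow_succ]
    ring
  · rw [insert_inter_of_notMem h]
    ring

lemma sum_sum_filter_mem_eq (A : Finset α) (g : ι → ℝ) :
    ∑ a ∈ A, ∑ i ∈ s with a ∈ f i, g i = ∑ i ∈ s, #(A ∩ f i) * g i := by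
  simp_rw [sum_filter]
  rw [sum_comm]
  refine sum_congr rfl fun i _ => ?_
  rw [sum_ite_mem, sum_const, nsmul_eq_mul]

lemma exists_potential_insert_le {A F : Finset α} (hA : A.Nonempty) (hAF : Disjoint A F)
    {η c : ℝ} (hη0 : 0 ≤ η) (hη1 : η ≤ 1) (hc : ∀ i ∈ s, c * #A ≤ #(A ∩ f i)) :
    ∃ a ∈ A, potential s f (1 - η) (insert a F) ≤ (1 - η * c) * potential s f (1 - η) F := by
  set w : α → ℝ := fun a => ∑ i ∈ s with a ∈ f i, (1 - η) ^ #(F ∩ f i)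
  obtain ⟨a, haA, hmax⟩ := exists_max_image A w hA
  have hsum : c * #A * potential s f (1 - η) F ≤ #A * w a :=
    calc c * #A * potential s f (1 - η) F
        = ∑ i ∈ s, c * #A * (1 - η) ^ #(F ∩ f i) := mul_sum _ _ _
      _ ≤ ∑ i ∈ s, #(A ∩ f i) * (1 - η) ^ #(F ∩ f i) :=
        sum_le_sum fun i hi => mul_le_mul_of_nonneg_right (hc i hi) (pow_nonneg (sub_nonneg.2 hη1) _)
      _ = ∑ b ∈ A, w b := (sum_sum_filter_mem_eq s f A _).symm
      _ ≤ ∑ _b ∈ A, w a := sum_le_sum hmax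
      _ = #A * w a := by rw [sum_const, nsmul_eq_mul]
  have hw : c * potential s f (1 - η) F ≤ w a := by
    have hApos : (0 : ℝ) < #A := by exact_mod_cast hA.card_pos
    exact le_of_mul_le_mul_left (by linarith) hApos
  refine ⟨a, haA, ?_⟩
  rw [potential_insert s f (disjoint_left.1 hAF haA)]
  linarith [mul_le_mul_of_nonneg_left hw hη0]

lemma le_card_inter_of_potential_le {F : Finset α} {η t P : ℝ} (hη0 : 0 ≤ η) (hη1 : η < 1)
    (hF : potential s f (1 - η) F ≤ P) (hP : P < exp (-(η / (1 - η) * t))) {i : ι}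
    (hi : i ∈ s) : t ≤ #(F ∩ f i) := by
  by_contra! hlt
  have := calc exp (-(η / (1 - η) * t))
      ≤ (1 - η) ^ #(F ∩ f i) := exp_neg_mul_le_one_sub_pow hη0 hη1 hlt.le
    _ ≤ potential s f (1 - η) F :=
      single_le_sum (f := fun i => (1 - η) ^ #(F ∩ f i))
        (fun _ _ => pow_nonneg (by linarith) _) hi
    _ ≤ P := hF
  linarith

end Potential

lemma one_sub_mul_mul_pow_le_sub_pow {a u c : ℝ} (hu : 0 ≤ u) (hua : u ≤ a) (huc : u ≤ c * a)
    (hc : 0 ≤ c) (d : ℕ) : (1 - d * c) * a ^ d ≤ (a - u) ^ d := by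
  rcases (hu.trans hua).eq_or_lt with rfl | ha
  · obtain rfl : u = 0 := le_antisymm hua hu
    rw [sub_zero]
    exact mul_le_of_le_one_left (pow_nonneg le_rfl d) (by nlinarith [mul_nonneg d.cast_nonneg hc])
  · have hua' : u / a ≤ c := (div_le_iff₀ ha).2 huc
    have hbernoulli := one_add_mul_le_pow (a := -(u / a))
      (by linarith [(div_le_one ha).2 hua]) d
    calc (1 - d * c) * a ^ d ≤ (1 + d * -(u / a)) * a ^ d := by gcongr; nlinarith
      _ ≤ (1 + -(u / a)) ^ d * a ^ d := by gcongr
      _ = (a - u) ^ d := by rw [← mul_pow]; field_simp; ring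

lemma card_biUnion_image_univ_le {ι V : Type*} [Fintype ι] [DecidableEq V] (F : Finset (ι → V)) :
    #(F.biUnion fun T => univ.image T) ≤ #F * Fintype.card ι :=
  card_biUnion_le_card_mul F _ _ fun _ _ => card_image_le.trans card_univ.le

section Tuples

variable {V : Type*} [Fintype V] [DecidableEq V] {d : ℕ}

lemma card_piFinset_compl_inter_ge (U : Finset V) (t : Finset (Fin d → V)) {β : ℝ} (hβ : 0 ≤ β)
    (hU : #U ≤ β * Fintype.card V) :
    #t - d * β * (Fintype.card V : ℝ) ^ d ≤ #(Fintype.piFinset (fun _ => Uᶜ) ∩ t) := by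
  set P := Fintype.piFinset fun _ : Fin d => Uᶜ
  have hP : (1 - d * β) * (Fintype.card V : ℝ) ^ d ≤ #P := by
    rw [Fintype.card_piFinset_const, card_compl, Nat.cast_pow, Nat.cast_sub (card_le_univ U)]
    exact one_sub_mul_mul_pow_le_sub_pow (Nat.cast_nonneg _) (by exact_mod_cast card_le_univ U) hU hβ d
  have hunion : (#(P ∪ t) : ℝ) ≤ (Fintype.card V : ℝ) ^ d := by
    exact_mod_cast (card_le_univ _).trans_eq (Fintype.card_pi_const V d)
  have : (#(P ∪ t) : ℝ) + #(P ∩ t) = #P + #t := by exact_mod_cast card_union_add_card_inter P t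
  linarith

lemma disjoint_range_of_mem_piFinset_compl {F : Finset (Fin d → V)} {T : Fin d → V}
    (hT : T ∈ Fintype.piFinset fun _ => (F.biUnion fun T => univ.image T)ᶜ) {T' : Fin d → V}
    (hT' : T' ∈ F) : Disjoint (Set.range T) (Set.range T') := by
  refine Set.disjoint_left.2 ?_
  rintro _ ⟨j, rfl⟩ ⟨j', hj'⟩
  exact mem_compl.1 (Fintype.mem_piFinset.1 hT j)
    (mem_biUnion.2 ⟨T', hT', mem_image.2 ⟨j', mem_univ _, hj'⟩⟩)

variable {ι : Type*} [NeZero d] (s : Finset ι) (f : ι → Finset (Fin d → V))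

lemma exists_disjoint_potential_insert_le [Nonempty V] (hs : s.Nonempty) {φ β η : ℝ}
    (hβ : 0 ≤ β) (hδ : d * β < φ) (hη0 : 0 ≤ η) (hη1 : η ≤ 1)
    (hf : ∀ i ∈ s, φ * (Fintype.card V : ℝ) ^ d ≤ #(f i))
    {F : Finset (Fin d → V)} (hF : (d * #F : ℝ) ≤ β * Fintype.card V) :
    ∃ T, (∃ i ∈ s, T ∈ f i) ∧ (∀ T' ∈ F, Disjoint (Set.range T) (Set.range T')) ∧
      potential s f (1 - η) (insert T F) ≤ (1 - η * (φ - d * β)) * potential s f (1 - η) F := by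
  set n := Fintype.card V
  set U := F.biUnion fun T => univ.image T
  have hU : (#U : ℝ) ≤ β * n := by
    have := card_biUnion_image_univ_le F
    rw [Fintype.card_fin] at this
    exact le_trans (by rw [mul_comm]; exact_mod_cast this) hF
  set A := Fintype.piFinset (fun _ => Uᶜ) ∩ s.biUnion f
  have hdens : ∀ i ∈ s, (φ - d * β) * (n : ℝ) ^ d ≤ #(A ∩ f i) := fun i hi => by
    rw [inter_assoc, inter_eq_right.2 (subset_biUnion_of_mem f hi)]
    linarith [hf i hi, card_piFinset_compl_inter_ge U (f i) hβ hU]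
  have hA : A.Nonempty := by
    obtain ⟨i, hi⟩ := hs
    have : (0 : ℝ) < #(A ∩ f i) :=
      (mul_pos (by linarith) (pow_pos (Nat.cast_pos.2 Fintype.card_pos) d)).trans_le (hdens i hi)
    exact (card_pos.1 (by exact_mod_cast this)).mono inter_subset_left
  have hAF : Disjoint A F := disjoint_left.2 fun T hTA hTF =>
    (Set.range_nonempty T).ne_empty <|
      disjoint_self.1 (disjoint_range_of_mem_piFinset_compl (mem_inter.1 hTA).1 hTF)
  have hc : ∀ i ∈ s, (φ - d * β) * #A ≤ #(A ∩ f i) := fun i hi => by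
    have : (#A : ℝ) ≤ (n : ℝ) ^ d := by
      exact_mod_cast (card_le_univ A).trans_eq (Fintype.card_pi_const V d)
    nlinarith [hdens i hi]
  obtain ⟨T, hTA, hT⟩ := exists_potential_insert_le s f hA hAF hη0 hη1 hc
  obtain ⟨hTU, hTf⟩ := mem_inter.1 hTA
  exact ⟨T, by simpa using hTf, fun T' hT' => disjoint_range_of_mem_piFinset_compl hTU hT', hT⟩

theorem exists_greedy_family [Nonempty V] (hs : s.Nonempty) {φ β η : ℝ}
    (hβ : 0 ≤ β) (hδ : d * β < φ) (hη0 : 0 ≤ η) (hη1 : η ≤ 1)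
    (hf : ∀ i ∈ s, φ * (Fintype.card V : ℝ) ^ d ≤ #(f i))
    (k : ℕ) (hk : (d * k : ℝ) ≤ β * Fintype.card V) :
    ∃ F : Finset (Fin d → V), #F = k ∧ (∀ T ∈ F, ∃ i ∈ s, T ∈ f i) ∧
      (F : Set (Fin d → V)).PairwiseDisjoint Set.range ∧
      potential s f (1 - η) F ≤ #s * exp (-(η * (φ - d * β) * k)) := by
  induction k with
  | zero => exact ⟨∅, by simp, by simp, by simp, by simp [potential]⟩
  | succ k ih =>
    obtain ⟨F, rfl, hFf, hFdisj, hFΦ⟩ :=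
      ih (le_trans (by gcongr; exact_mod_cast k.le_succ) hk)
    obtain ⟨T, hTf, hTdisj, hTΦ⟩ := exists_disjoint_potential_insert_le s f hs hβ hδ hη0 hη1 hf
      (le_trans (by gcongr; exact_mod_cast (#F).le_succ) hk)
    have hTF : T ∉ F := fun h => by simpa using hTdisj T h
    refine ⟨insert T F, card_insert_of_notMem hTF, (forall_mem_insert _ _ _).2 ⟨hTf, hFf⟩, ?_, ?_⟩
    · rw [coe_insert]
      exact hFdisj.insert fun T' hT' _ => hTdisj T' hT'
    · have hstep : 1 - η * (φ - d * β) ≤ exp (-(η * (φ - d * β))) := by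
        linarith [add_one_le_exp (-(η * (φ - d * β)))]
      calc potential s f (1 - η) (insert T F)
          ≤ (1 - η * (φ - d * β)) * potential s f (1 - η) F := hTΦ
        _ ≤ exp (-(η * (φ - d * β))) * (#s * exp (-(η * (φ - d * β) * #F))) := by
          gcongr
          exact potential_nonneg s f (by linarith) F
        _ = #s * exp (-(η * (φ - d * β) * ↑(#F + 1))) := by
          rw [mul_left_comm, ← exp_add]; push_cast; ring_nf

theorem exists_absorbing_family [Nonempty V] (hs : s.Nonempty) {φ β γ η : ℝ}
    (hβ : 0 ≤ β) (hδ : d * β < φ) (hη0 : 0 ≤ η) (hη1 : η < 1)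
    (hf : ∀ i ∈ s, φ * (Fintype.card V : ℝ) ^ d ≤ #(f i))
    (hdecay : #s * exp (-(η * (φ - d * β) * ⌊β * Fintype.card V / d⌋₊)) <
      exp (-(η / (1 - η) * (γ * Fintype.card V)))) :
    ∃ F : Finset (Fin d → V), (∀ T ∈ F, ∃ i ∈ s, T ∈ f i) ∧ (#F : ℝ) ≤ β * Fintype.card V / d ∧
      (F : Set (Fin d → V)).PairwiseDisjoint Set.range ∧
      ∀ i ∈ s, γ * Fintype.card V ≤ #(F ∩ f i) := by
  have hfloor := Nat.floor_le (a := β * Fintype.card V / d) (by positivity)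
  obtain ⟨F, hFk, hFf, hFdisj, hFΦ⟩ := exists_greedy_family s f hs hβ hδ hη0 hη1.le hf _
    ((le_div_iff₀' (Nat.cast_pos.2 (NeZero.pos d))).1 hfloor)
  exact ⟨F, hFf, hFk ▸ hfloor, hFdisj,
    fun i hi => le_card_inter_of_potential_le s f hη0 hη1 hFΦ hdecay hi⟩

end Tuples

lemma exists_mul_div_one_sub_lt {γ B : ℝ} (hγ : 0 < γ) (hγB : γ < B) :
    ∃ η, 0 < η ∧ η < 1 ∧ η / (1 - η) * γ < η * B := by
  have hB : 0 < B := hγ.trans hγB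
  have hγB' : γ / B < 1 := (div_lt_one hB).2 hγB
  set η := (1 - γ / B) / 2 with hη
  have hη1 : η < 1 := by rw [hη]; linarith [div_pos hγ hB]
  refine ⟨η, by rw [hη]; linarith, hη1, ?_⟩
  have h1η : B * (1 - η) = (B + γ) / 2 := by rw [hη]; field_simp; ring
  rw [div_mul_eq_mul_div, div_lt_iff₀ (by linarith)]
  nlinarith [mul_lt_mul_of_pos_left (show γ < B * (1 - η) by linarith) (show 0 < η by linarith)]

lemma eventually_pow_mul_exp_lt_exp (m : ℕ) (C : ℝ) {a b : ℝ} (hab : a < b) :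
    ∀ᶠ n : ℕ in atTop, (n : ℝ) ^ m * exp (C - b * n) < exp (-(a * n)) := by
  have h := (isLittleO_pow_exp_pos_mul_atTop m (sub_pos.2 hab)).def (half_pos (exp_pos (-C)))
  filter_upwards [tendsto_natCast_atTop_atTop.eventually h] with n hn
  rw [norm_of_nonneg (by positivity), norm_of_nonneg (exp_pos _).le] at hn
  calc (n : ℝ) ^ m * exp (C - b * n)
      < exp (-C) * exp ((b - a) * n) * exp (C - b * n) := by
        gcongr
        linarith [mul_pos (exp_pos (-C)) (exp_pos ((b - a) * n))]
    _ = exp (-(a * n)) := by rw [← exp_add, ← exp_add]; ring_nf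

lemma eventually_pow_mul_exp_neg_floor_lt (m d : ℕ) {β δ γ η : ℝ} (hδ : 0 ≤ δ) (hη : 0 ≤ η)
    (hrate : η / (1 - η) * γ < η * (β * δ / d)) :
    ∀ᶠ n : ℕ in atTop,
      (n : ℝ) ^ m * exp (-(η * δ * ⌊β * n / d⌋₊)) < exp (-(η / (1 - η) * (γ * n))) := by
  filter_upwards [eventually_pow_mul_exp_lt_exp m (η * δ) hrate] with n hn
  calc (n : ℝ) ^ m * exp (-(η * δ * ⌊β * n / d⌋₊))
      ≤ (n : ℝ) ^ m * exp (η * δ - η * (β * δ / d) * n) := by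
        gcongr
        have hkn : β * n / d - 1 ≤ ⌊β * n / d⌋₊ := (Nat.sub_one_lt_floor _).le
        have : η * (β * δ / d) * n = η * δ * (β * n / d) := by ring
        nlinarith [mul_le_mul_of_nonneg_left hkn (mul_nonneg hη hδ)]
    _ < exp (-(η / (1 - η) * (γ * n))) := by rw [← mul_assoc]; exact hn

theorem absorbing_lemma_general (m d : ℕ) (hd : 1 ≤ d)
    (φ β γ : ℝ)
    (hβ : β ∈ Set.Ioo 0 (φ / (2 * d)))
    (hγ : γ ∈ Set.Ioo 0 (2 * β * (φ / (2 * d) - β))) :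
    ∃ n0 : ℕ, ∀ (V : Type) [Fintype V] (f : Finset V → Set (Fin d → V)),
      n0 ≤ Fintype.card V →
      (∀ S : Finset V, S.card = m →
        φ * (Fintype.card V : ℝ) ^ d ≤ (Nat.card (f S) : ℝ)) →
      ∃ F : Finset (Fin d → V),
        (∀ T ∈ F, ∃ S : Finset V, S.card = m ∧ T ∈ f S) ∧
        ((F.card : ℝ) ≤ β * (Fintype.card V : ℝ) / d) ∧
        (∀ T ∈ F, ∀ T' ∈ F, T ≠ T' → Disjoint (Set.range T) (Set.range T')) ∧
        ∀ S : Finset V, S.card = m →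
          γ * (Fintype.card V : ℝ) ≤ (Nat.card (f S ∩ (F : Set (Fin d → V)) : Set (Fin d → V)) : ℝ) := by
  classical
  have : NeZero d := ⟨by omega⟩
  obtain ⟨hβ0, -⟩ := hβ
  obtain ⟨hγ0, hγβ⟩ := hγ
  have hd0 : (0 : ℝ) < d := by exact_mod_cast hd
  have hγB : γ < β * (φ - d * β) / d := hγβ.trans_le <| by
    have : β * (φ - d * β) / d - 2 * β * (φ / (2 * d) - β) = β ^ 2 := by field_simp; ring
    nlinarith [sq_nonneg β]
  have hδ : 0 < φ - d * β :=
    pos_of_mul_pos_right ((div_pos_iff_of_pos_right hd0).1 (hγ0.trans hγB)) hβ0.le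
  obtain ⟨η, hη0, hη1, hrate⟩ := exists_mul_div_one_sub_lt hγ0 hγB
  obtain ⟨n0, hn0⟩ :=
    eventually_atTop.1 (eventually_pow_mul_exp_neg_floor_lt m d hδ.le hη0.le hrate)
  refine ⟨max n0 (max m 1), fun V _ f hn hf => ?_⟩
  have : Nonempty V := Fintype.card_pos_iff.1 (by omega)
  set s := powersetCard m (univ : Finset V)
  have hsn : (#s : ℝ) ≤ (Fintype.card V : ℝ) ^ m := by
    rw [card_powersetCard, card_univ]
    exact_mod_cast (Fintype.card V).choose_le_pow m
  obtain ⟨F, hFf, hFk, hFdisj, hFs⟩ := exists_absorbing_family s (fun S => (f S).toFinset)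
    (powersetCard_nonempty.2 (by rw [card_univ]; omega)) hβ0.le (by linarith) hη0.le hη1
    (fun S hS => by rw [← Nat.card_eq_card_toFinset]; exact hf S (mem_powersetCard.1 hS).2)
    ((mul_le_mul_of_nonneg_right hsn (exp_pos _).le).trans_lt (hn0 _ (le_of_max_le_left hn)))
  refine ⟨F, fun T hT => ?_, hFk, hFdisj, fun S hS => ?_⟩
  · obtain ⟨S, hS, hT⟩ := hFf T hT
    exact ⟨S, (mem_powersetCard.1 hS).2, by simpa using hT⟩
  · rw [Nat.card_coe_set_eq, Set.inter_comm, ← Set.coe_toFinset (f S), ← coe_inter,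
      Set.ncard_coe_finset]
    exact hFs S (mem_powersetCard.2 ⟨subset_univ _, hS⟩)

/-- **Lemma 17 (absorbing lemma).** Let `m, d ≥ 1`, `φ > 0`, `β ∈ (0, φ/(2d))` and
`γ ∈ (0, 2β(φ/(2d) − β))`. There is `n0` such that for every set `V` with `|V| = n ≥ n0`
and every assignment of a set `f(S) ⊆ V^d` with `|f(S)| ≥ φ·n^d` to each `m`-element subset
`S` of `V`, there is a family `F` of at most `βn/d` tuples, each lying in some `f(S)`,
with pairwise disjoint images, such that `|f(S) ∩ F| ≥ γn` for every `m`-element `S`. -/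
theorem absorbing_lemma (m d : ℕ) (hm : 1 ≤ m) (hd : 1 ≤ d)
    (φ β γ : ℝ) (hφ : 0 < φ)
    (hβ : β ∈ Set.Ioo 0 (φ / (2 * d)))
    (hγ : γ ∈ Set.Ioo 0 (2 * β * (φ / (2 * d) - β))) :
    ∃ n0 : ℕ, ∀ (V : Type) [Fintype V] (f : Finset V → Set (Fin d → V)),
      n0 ≤ Fintype.card V →
      (∀ S : Finset V, S.card = m →
        φ * (Fintype.card V : ℝ) ^ d ≤ (Nat.card (f S) : ℝ)) →
      ∃ F : Finset (Fin d → V),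
        (∀ T ∈ F, ∃ S : Finset V, S.card = m ∧ T ∈ f S) ∧
        ((F.card : ℝ) ≤ β * (Fintype.card V : ℝ) / d) ∧
        (∀ T ∈ F, ∀ T' ∈ F, T ≠ T' → Disjoint (Set.range T) (Set.range T')) ∧
        ∀ S : Finset V, S.card = m →
          γ * (Fintype.card V : ℝ) ≤ (Nat.card (f S ∩ (F : Set (Fin d → V)) : Set (Fin d → V)) : ℝ) :=
  absorbing_lemma_general m d hd φ β γ hβ hγ
end
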